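/- arXiv:2210.02514 — 3 statements merged into one kernel-verified Lean document; each statement's English description precedes it below -/
import Mathlib

section
/- Suppose M is a δ-guessing elementary submodel, θ ∈ M is a cardinal with cof(θ) ≥ δ, λ = cof(sup(M ∩ θ)), and M is closed under sequences of length < λ that are bounded in M. Then |M| ≥ 2^λ. -/
open Cardinal

namespace GM

/-- The first-order language of set theory: a single binary relation. -/
def memLang : FirstOrder.Language :=
  { Functions := fun _ => Empty
    Relations := fun n => match n with | 2 => Unit | _ => Empty }

/-- Any set of ZF sets is a structure for the membership language,
interpreting the relation by `∈`. -/
instance setStructure (S : Set ZFSet) : memLang.Structure S where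
  funMap {n} f _ := f.elim
  RelMap {n} r v :=
    match n, r, v with
    | 2, _, v => ((v 0 : ↥S) : ZFSet) ∈ ((v 1 : ↥S) : ZFSet)
    | 0, r, _ => r.elim
    | 1, r, _ => r.elim
    | (_+3), r, _ => r.elim

/-- `M` is an elementary submodel of `H` (both viewed as ∈-structures). -/
def ElemSub (M H : Set ZFSet) : Prop :=
  ∃ h : M ⊆ H, ∀ (n : ℕ) (φ : memLang.Formula (Fin n)) (v : Fin n → M),
    φ.Realize (fun i => Set.inclusion h (v i)) ↔ φ.Realize v

/-- `x` is guessed in `M`: some `y ∈ M` has the same trace on `M` as `x`. -/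
def Guessed (x : ZFSet) (M : Set ZFSet) : Prop :=
  ∃ y ∈ M, y.toSet ∩ M = x.toSet ∩ M

/-- `x` is bounded in `M`: `x` is a subset of an element of `M`. -/
def Bounded (x : ZFSet) (M : Set ZFSet) : Prop :=
  ∃ y ∈ M, x.toSet ⊆ y.toSet

/-- `x` is δ-approximated in `M`: all intersections with `<δ`-sized elements of `M` lie in `M`. -/
def Approx (δ : Cardinal.{1}) (x : ZFSet) (M : Set ZFSet) : Prop :=
  ∀ a ∈ M, #a.toSet < δ → (x ∩ a) ∈ M

/-- `M` has the δ-guessing property (in `V`). -/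
def IsGuessing (δ : Cardinal.{1}) (M : Set ZFSet) : Prop :=
  ∀ x : ZFSet, Bounded x M → Approx δ x M → Guessed x M

/-- `M` has the δ-guessing property in `N`. -/
def IsGuessingIn (δ : Cardinal.{1}) (M N : Set ZFSet) : Prop :=
  ∀ x ∈ N, Bounded x M → Approx δ x M → Guessed x M

/-- The pair `(M, N)` has the δ-covering property (`≤ δ`-sized sets version). -/
def CoveringPair (δ : Cardinal.{1}) (M N : Set ZFSet) : Prop :=
  ∀ x ∈ N, #x.toSet ≤ δ → Bounded x M →
    ∃ y ∈ M, #y.toSet ≤ δ ∧ x.toSet ∩ M ⊆ y.toSet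

/-- A transitive class. -/
def Transitive' (H : Set ZFSet) : Prop := ∀ x ∈ H, x.toSet ⊆ H

/-- A powerful model: transitive and containing every set bounded in it. -/
def Powerful (H : Set ZFSet) : Prop :=
  Transitive' H ∧ ∀ x : ZFSet, Bounded x H → x ∈ H

/-- `κ` is `κ_M`: the least ordinal belonging to `M` but not a subset of `M`. -/
def IsKappa (M : Set ZFSet) (κ : ZFSet) : Prop :=
  κ.IsOrdinal ∧ κ ∈ M ∧ ¬ κ.toSet ⊆ M ∧
    ∀ β : ZFSet, β.IsOrdinal → β ∈ M → ¬ β.toSet ⊆ M → κ.toSet ⊆ β.toSet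

/-- A δ-guessing elementary submodel: an elementary submodel of some powerful
model with the δ-guessing property. -/
def IsGesm (δ : Cardinal.{1}) (M : Set ZFSet) : Prop :=
  (∃ H : Set ZFSet, Powerful H ∧ ElemSub M H) ∧ IsGuessing δ M

/-- The cofinality of the supremum of a set of (ZF-set) ordinals: the least
cardinality of a `⊆`-cofinal subset. -/
noncomputable def cofSup (A : Set ZFSet) : Cardinal.{1} :=
  sInf { c | ∃ B ⊆ A, #B = c ∧ ∀ x ∈ A, ∃ y ∈ B, x.toSet ⊆ y.toSet }

/-- Hereditarily of cardinality less than `θ`. -/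
inductive Hered (θ : Cardinal.{1}) : ZFSet → Prop
  | intro (x : ZFSet) : #x.toSet < θ → (∀ y ∈ x.toSet, Hered θ y) → Hered θ x

/-- The class `H_θ` of sets hereditarily of cardinality `< θ`. -/
def HSet (θ : Cardinal.{1}) : Set ZFSet := {x | Hered θ x}

/-- `S` is stationary in `𝒫_κ(X)`: every function `F` from finite subsets of `X`
to `<κ`-sized subsets of `X` has a closure point in `S`. -/
def StationaryIn (S : Set (Set ZFSet)) (X : Set ZFSet) (κ : Cardinal.{1}) : Prop :=
  ∀ F : Finset ZFSet → Set ZFSet, (∀ a : Finset ZFSet, F a ⊆ X ∧ #(F a) < κ) →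
    ∃ A ∈ S, A ⊆ X ∧ #A < κ ∧ ∀ a : Finset ZFSet, ↑a ⊆ A → F a ⊆ A

/-- The guessing model principle witnessed by models with property `P`:
for all sufficiently large regular `θ` there are stationarily many `<κ`-sized
δ-guessing elementary submodels of `H_θ` satisfying `P`. -/
def GMPwit (κ δ : Cardinal.{1}) (P : Set ZFSet → Prop) : Prop :=
  ∃ θ₀ : Cardinal.{1}, ∀ θ : Cardinal.{1}, θ₀ ≤ θ → θ.IsRegular →
    StationaryIn {M | ElemSub M (HSet θ) ∧ IsGuessing δ M ∧ #M < κ ∧ P M}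
      (HSet θ) κ

/-- The guessing model principle `GMP(κ, δ)`. -/
def GMP (κ δ : Cardinal.{1}) : Prop := GMPwit κ δ fun _ => True

/-- `R` is a binary relation on `T` (a set of ordered pairs from `T`). -/
def IsRel (T R : ZFSet) : Prop :=
  ∀ p ∈ R.toSet, ∃ s ∈ T.toSet, ∃ t ∈ T.toSet, p = ZFSet.pair s t

/-- The set of `R`-predecessors of `t` in `T`. -/
def Pred (T R t : ZFSet) : Set ZFSet := {s | s ∈ T.toSet ∧ ZFSet.pair s t ∈ R}

/-- `t` has level `α` in the tree `(T, R)`: the predecessors of `t` are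
order-isomorphic to the ordinal `α`. -/
def HasLevel (T R t α : ZFSet) : Prop :=
  α.IsOrdinal ∧ ∃ e : α.toSet ≃ Pred T R t,
    ∀ a b : α.toSet, (a : ZFSet) ∈ (b : ZFSet) ↔ ZFSet.pair (e a : ZFSet) (e b : ZFSet) ∈ R

/-- `(T, R)` is a tree of height the ordinal `Λ`. -/
def IsTreeOfHeight (T R Λ : ZFSet) : Prop :=
  Λ.IsOrdinal ∧ IsRel T R ∧
  (∀ s t u : ZFSet, ZFSet.pair s t ∈ R → ZFSet.pair t u ∈ R → ZFSet.pair s u ∈ R) ∧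
  (∀ t : ZFSet, ZFSet.pair t t ∉ R) ∧
  (∀ t ∈ T.toSet, ∃ α ∈ Λ.toSet, HasLevel T R t α) ∧
  (∀ α ∈ Λ.toSet, ∃ t ∈ T.toSet, HasLevel T R t α)

/-- `b` is a cofinal branch through the tree `(T, R)` of height `Λ`. -/
def IsBranch (T R Λ b : ZFSet) : Prop :=
  b.toSet ⊆ T.toSet ∧
  (∀ s ∈ b.toSet, ∀ t ∈ b.toSet, s = t ∨ ZFSet.pair s t ∈ R ∨ ZFSet.pair t s ∈ R) ∧
  ∀ α ∈ Λ.toSet, ∃ t ∈ b.toSet, HasLevel T R t α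

/-- Every level of `(T, R)` has size `< κ`. -/
def SlimTree (T R Λ : ZFSet) (κ : Cardinal.{1}) : Prop :=
  ∀ α ∈ Λ.toSet, #{t : ZFSet | t ∈ T.toSet ∧ HasLevel T R t α} < κ

/-- `Λ` is (as a ZF-set ordinal) the cardinal `c`: an ordinal of cardinality `c`
all of whose elements have cardinality `< c`. -/
def IsCardOrd (Λ : ZFSet) (c : Cardinal.{1}) : Prop :=
  Λ.IsOrdinal ∧ #Λ.toSet = c ∧ ∀ β ∈ Λ.toSet, #β.toSet < c

/-- `M` is closed under `<μ`-sized subsets (as sets of its elements). -/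
def ClosedUnder (μ : Cardinal.{1}) (M : Set ZFSet) : Prop :=
  ∀ A : Set ZFSet, A ⊆ M → #A < μ → ∃ z ∈ M, z.toSet = A

/-- `M` is closed under `<μ`-sized subsets which are bounded in `M`. -/
def SeqClosed (μ : Cardinal.{1}) (M : Set ZFSet) : Prop :=
  ∀ A : Set ZFSet, A ⊆ M → #A < μ → (∃ y ∈ M, A ⊆ y.toSet) → ∃ z ∈ M, z.toSet = A

/-- `β` is a limit point of the set (of ordinals) `c`. -/
def LimPt (c β : ZFSet) : Prop :=
  β ≠ ∅ ∧ ∀ γ ∈ β.toSet, ∃ ξ ∈ c.toSet, ξ ∈ β.toSet ∧ (γ ∈ ξ.toSet ∨ γ = ξ)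

/-- `c` is a club in the ordinal `α`. -/
def ClubIn (c α : ZFSet) : Prop :=
  c.toSet ⊆ α.toSet ∧ (∀ β ∈ α.toSet, ∃ γ ∈ c.toSet, β ∈ γ.toSet ∨ β = γ) ∧
  ∀ β ∈ α.toSet, LimPt c β → β ∈ c.toSet

/-- `c` has order type the ordinal `o`. -/
def HasOtp (c o : ZFSet) : Prop :=
  o.IsOrdinal ∧ ∃ e : o.toSet ≃ c.toSet,
    ∀ a b : o.toSet, (a : ZFSet) ∈ (b : ZFSet) ↔ ((e a : ZFSet) ∈ (e b : ZFSet))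

/-- `f` is (the graph of) a function from `a` to `b`. -/
def IsFuncRel (f a b : ZFSet) : Prop :=
  (∀ p ∈ f.toSet, ∃ x ∈ a.toSet, ∃ y ∈ b.toSet, p = ZFSet.pair x y) ∧
  ∀ x ∈ a.toSet, ∃! y : ZFSet, ZFSet.pair x y ∈ f

/-- `f` is a surjection from `a` onto `b`. -/
def SurjOnto (f a b : ZFSet) : Prop :=
  IsFuncRel f a b ∧ ∀ y ∈ b.toSet, ∃ x ∈ a.toSet, ZFSet.pair x y ∈ f

/-- `θ` is a cardinal in the (transitive) class `V`: an ordinal not surjected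
onto by any smaller ordinal via a function of `V`. -/
def IsCardinalIn (V : Set ZFSet) (θ : ZFSet) : Prop :=
  θ.IsOrdinal ∧ ∀ β ∈ θ.toSet, ∀ f ∈ V, ¬ SurjOnto f β θ

/-- A dense subset of a preorder. -/
def DenseSub (P : Type) [Preorder P] (D : Set P) : Prop := ∀ p : P, ∃ q ∈ D, q ≤ p

/-- A subset of a preorder dense below `p₀`. -/
def DenseBelow (P : Type) [Preorder P] (p₀ : P) (D : Set P) : Prop :=
  ∀ p : P, p ≤ p₀ → ∃ q ∈ D, q ≤ p

/-- A filter on a preorder. -/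
def IsFilterSet (P : Type) [Preorder P] (F : Set P) : Prop :=
  F.Nonempty ∧ (∀ p ∈ F, ∀ q : P, p ≤ q → q ∈ F) ∧
    ∀ p ∈ F, ∀ q ∈ F, ∃ r ∈ F, r ≤ p ∧ r ≤ q

/-- The forcing axiom `FA(P, κ)`: any κ-many dense sets are met by a filter. -/
def FA (P : Type) [Preorder P] (κ : Cardinal.{1}) : Prop :=
  ∀ 𝒟 : Set (Set P), Cardinal.lift.{1} #𝒟 ≤ κ →
    (∀ D ∈ 𝒟, DenseSub P D) →
    ∃ F : Set P, IsFilterSet P F ∧ ∀ D ∈ 𝒟, (F ∩ D).Nonempty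

end GM

/-!
Let `C = M ∩ θ` and choose a cofinal `B ⊆ C` of order type `λ = cf(sup C)`, so that every proper
initial segment of `B` has size `< λ`. Each `X ⊆ B` is bounded in `M` (by `θ`) and
δ-approximated in `M`: for `a ∈ M` with `|a| < δ ≤ cf θ`, the set `a ∩ θ` is bounded below `θ`,
by elementarity by some `γ ∈ M ∩ θ`; hence `X ∩ a` is a subset of `M` of size `< λ`, bounded by
`θ`, and lies in `M` by closure. So `X` is guessed by some `y_X ∈ M` with `y_X ∩ M = X`, and
`X ↦ y_X` injects `𝒫(B)` into `M`, giving `2^λ ≤ 2^|B| ≤ |M|`.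
-/

theorem Order.exists_isCofinal_forall_mk_inter_Iio_lt {α : Type*} [LinearOrder α]
    [WellFoundedLT α] : ∃ s : Set α, IsCofinal s ∧ ∀ a, #↥(s ∩ Set.Iio a) < Order.cof α := by
  obtain ⟨s, hs, hs_type⟩ := Ordinal.exists_ord_cof_eq α
  have hs_card : #s = Order.cof α := by
    rw [← Ordinal.card_type (α := s) (· < ·), hs_type, card_ord]
  refine ⟨s, hs, fun a ↦ ?_⟩
  obtain ⟨t, hts, hat⟩ := hs a
  calc #↥(s ∩ Set.Iio a) ≤ #(Set.Iio (⟨t, hts⟩ : s)) :=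
        mk_le_of_injective (f := fun x ↦ ⟨⟨x, x.2.1⟩, x.2.2.trans_le hat⟩)
          fun x y h ↦ Subtype.ext (congrArg (fun z ↦ (z.1 : α)) h)
    _ < #s := mk_Iio_lt _ (by rw [hs_card, hs_type])
    _ = Order.cof α := hs_card

namespace GM

theorem cofSup_eq_cof (A : Set ZFSet) : cofSup A = Order.cof A := by
  apply le_antisymm
  · refine Order.le_cof_iff.2 fun s hs ↦ csInf_le' ⟨Subtype.val '' s, by simp,
      mk_image_eq Subtype.val_injective, fun x hx ↦ ?_⟩
    obtain ⟨y, hys, hxy⟩ := hs ⟨x, hx⟩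
    exact ⟨y, Set.mem_image_of_mem _ hys, hxy⟩
  · obtain ⟨B, hBA, hB_card, hB⟩ :
        cofSup A ∈ {c | ∃ B ⊆ A, #B = c ∧ ∀ x ∈ A, ∃ y ∈ B, x.toSet ⊆ y.toSet} :=
      csInf_mem ⟨#A, A, subset_rfl, rfl, fun x hx ↦ ⟨x, hx, subset_rfl⟩⟩
    rw [← hB_card]
    refine (Order.cof_le fun x ↦ ?_).trans (mk_preimage_of_injective _ B Subtype.val_injective)
    obtain ⟨y, hyB, hxy⟩ := hB x x.2
    exact ⟨⟨y, hBA hyB⟩, hyB, hxy⟩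

section OrdinalSet

variable {A : Set ZFSet}

theorem wellFoundedLT_of_isOrdinal (hA : ∀ x ∈ A, x.IsOrdinal) : WellFoundedLT A := by
  refine ⟨Subrelation.wf (r := InvImage (· < ·) fun a : A ↦ a.1.rank) (fun {a b} hab ↦ ?_)
    (InvImage.wf _ wellFounded_lt)⟩
  exact ZFSet.rank_lt_of_mem (((hA b b.2).not_subset_iff_mem (hA a a.2)).1 hab.2)

theorem exists_cofinal_forall_mk_lt_cofSup (hA : ∀ x ∈ A, x.IsOrdinal) :
    ∃ B ⊆ A, (∀ x ∈ A, ∃ y ∈ B, x.toSet ⊆ y.toSet) ∧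
      ∀ γ ∈ A, #{β | β ∈ B ∧ β ∈ γ} < cofSup A := by
  -- The order stays inclusion, so `IsCofinal` in `A` is the cofinality used by `cofSup`.
  let : LinearOrder A :=
    { (inferInstance : PartialOrder A) with
      le_total := fun a b ↦ (hA a a.2).subset_total (hA b b.2)
      toDecidableLE := Classical.decRel _ }
  have := wellFoundedLT_of_isOrdinal hA
  obtain ⟨s, hs, hs_lt⟩ := Order.exists_isCofinal_forall_mk_inter_Iio_lt (α := A)
  refine ⟨Subtype.val '' s, by simp, fun x hx ↦ ?_, fun γ hγ ↦ ?_⟩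
  · obtain ⟨y, hys, hxy⟩ := hs ⟨x, hx⟩
    exact ⟨y, Set.mem_image_of_mem _ hys, hxy⟩
  · have hsub :
        {β | β ∈ Subtype.val '' s ∧ β ∈ γ} ⊆ Subtype.val '' (s ∩ Set.Iio ⟨γ, hγ⟩) := by
      rintro _ ⟨⟨b, hbs, rfl⟩, hbγ⟩
      refine ⟨b, ⟨hbs, lt_of_le_of_ne ((hA γ hγ).subset_of_mem hbγ) ?_⟩, rfl⟩
      rintro rfl
      exact ZFSet.mem_irrefl _ hbγ
    calc #{β | β ∈ Subtype.val '' s ∧ β ∈ γ} ≤ #(Subtype.val '' (s ∩ Set.Iio ⟨γ, hγ⟩)) :=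
          mk_le_mk_of_subset hsub
      _ ≤ #↥(s ∩ Set.Iio ⟨γ, hγ⟩) := mk_image_le
      _ < Order.cof A := hs_lt _
      _ = cofSup A := (cofSup_eq_cof A).symm

theorem exists_forall_mem_of_mk_lt_cofSup {S : Set ZFSet} (hA : ∀ x ∈ A, x.IsOrdinal)
    (hS : #S < cofSup A) : ∃ γ ∈ A, ∀ y ∈ S ∩ A, y ∈ γ := by
  by_contra! h
  have hcofinal : ∀ x ∈ A, ∃ y ∈ S ∩ A, x.toSet ⊆ y.toSet := fun x hx ↦ by
    obtain ⟨y, hy, hyx⟩ := h x hx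
    exact ⟨y, hy, ((hA y hy.2).notMem_iff_subset (hA x hx)).1 hyx⟩
  have hle : cofSup A ≤ #(S ∩ A : Set ZFSet) :=
    csInf_le' ⟨S ∩ A, Set.inter_subset_right, rfl, hcofinal⟩
  exact (hle.trans (mk_le_mk_of_subset Set.inter_subset_left)).not_gt hS

end OrdinalSet

section Elementarity

open FirstOrder FirstOrder.Language

abbrev memRel : memLang.Relations 2 := ()

theorem relMap_memRel (S : Set ZFSet) (a b : S) :
    Structure.RelMap memRel ![a, b] ↔ a.1 ∈ b.1 :=
  Iff.rfl

def boundFormula : memLang.Formula (Fin 2) :=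
  BoundedFormula.ex
    (memRel.boundedFormula₂ (&0) (Term.var (Sum.inl 1)) ⊓
      BoundedFormula.all
        ((memRel.boundedFormula₂ (&1) (Term.var (Sum.inl 0)) ⊓
          memRel.boundedFormula₂ (&1) (Term.var (Sum.inl 1))) ⟹
          memRel.boundedFormula₂ (&1) (&0)))

theorem realize_boundFormula (S : Set ZFSet) (v : Fin 2 → S) :
    boundFormula.Realize v ↔
      ∃ γ : S, γ.1 ∈ (v 1).1 ∧ ∀ y : S, y.1 ∈ (v 0).1 → y.1 ∈ (v 1).1 → y.1 ∈ γ.1 := by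
  simp [boundFormula, Formula.Realize, Fin.snoc, relMap_memRel]

theorem ElemSub.exists_mem_bound {M H : Set ZFSet} (hMH : ElemSub M H) (hH : Transitive' H)
    {a θ γ₀ : ZFSet} (ha : a ∈ M) (hθ : θ ∈ M) (hγ₀ : γ₀ ∈ θ)
    (hbound : ∀ y ∈ a, y ∈ θ → y ∈ γ₀) :
    ∃ γ ∈ M, γ ∈ θ ∧ ∀ y ∈ M, y ∈ a → y ∈ θ → y ∈ γ := by
  obtain ⟨hMH, helem⟩ := hMH
  have hM_realize := (helem 2 boundFormula ![⟨a, ha⟩, ⟨θ, hθ⟩]).1 <| by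
    rw [realize_boundFormula]
    exact ⟨⟨γ₀, hH θ (hMH hθ) hγ₀⟩, hγ₀, fun y ↦ hbound y⟩
  rw [realize_boundFormula] at hM_realize
  obtain ⟨γ, hγθ, hγ⟩ := hM_realize
  exact ⟨γ, γ.2, hγθ, fun y hy ↦ hγ ⟨y, hy⟩⟩

end Elementarity

theorem exists_toSet_eq_of_subset {X : Set ZFSet} {θ : ZFSet} (hX : X ⊆ θ.toSet) :
    ∃ x : ZFSet, x.toSet = X :=
  ⟨θ.sep (· ∈ X), Set.ext fun _ ↦ ⟨fun hy ↦ (ZFSet.mem_sep.1 hy).2,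
    fun hy ↦ ZFSet.mem_sep.2 ⟨hX hy, hy⟩⟩⟩

theorem two_power_mk_le_of_forall_exists_trace {B M : Set ZFSet}
    (h : ∀ X ⊆ B, ∃ y ∈ M, y.toSet ∩ M = X) : 2 ^ #B ≤ #M := by
  choose! f hfM hf using h
  rw [← mk_set]
  refine mk_le_of_injective (f := fun X : Set B ↦ ⟨f (Subtype.val '' X), hfM _ (by simp)⟩)
    fun X Y hXY ↦ Set.image_injective.2 Subtype.val_injective ?_
  rw [← hf (Subtype.val '' X) (by simp), ← hf (Subtype.val '' Y) (by simp)]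
  exact congrArg (fun y : M ↦ y.1.toSet ∩ M) hXY

theorem approx_of_toSet_subset {δ lam : Cardinal} {M H B : Set ZFSet} {θ x : ZFSet}
    (hMH : ElemSub M H) (hH : Transitive' H) (hθ : θ.IsOrdinal) (hθM : θ ∈ M)
    (hcof : δ ≤ cofSup θ.toSet) (hclosed : SeqClosed lam M) (hBM : B ⊆ M) (hBθ : B ⊆ θ.toSet)
    (hB_seg : ∀ γ ∈ M, γ ∈ θ → #{β | β ∈ B ∧ β ∈ γ} < lam) (hxB : x.toSet ⊆ B) :
    Approx δ x M := by
  intro a ha ha_card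
  obtain ⟨γ₀, hγ₀, hγ₀_bound⟩ := exists_forall_mem_of_mk_lt_cofSup (fun y hy ↦ hθ.mem hy)
    (ha_card.trans_le hcof)
  obtain ⟨γ, hγM, hγθ, hγ_bound⟩ :=
    hMH.exists_mem_bound hH ha hθM hγ₀ fun y hya hyθ ↦ hγ₀_bound y ⟨hya, hyθ⟩
  have hxa : (x ∩ a).toSet ⊆ {β | β ∈ B ∧ β ∈ γ} := fun y hy ↦ by
    obtain ⟨hyx, hya⟩ := ZFSet.mem_inter.1 hy
    have hyB := hxB hyx
    exact ⟨hyB, hγ_bound y (hBM hyB) hya (hBθ hyB)⟩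
  obtain ⟨z, hzM, hz⟩ := hclosed _ (hxa.trans fun y hy ↦ hBM hy.1)
    ((mk_le_mk_of_subset hxa).trans_lt (hB_seg γ hγM hγθ)) ⟨θ, hθM, hxa.trans fun y hy ↦ hBθ hy.1⟩
  rwa [← (SetLike.coe_injective hz : z = x ∩ a)]

end GM

/-- a sufficiently closed δ-gesm has size at least `2 ^ cof(sup(M ∩ θ))`. -/
theorem stmt2
    (δ : Cardinal.{1}) (M : Set ZFSet) (hM : GM.IsGesm δ M)
    (θ : ZFSet) (hθcard : GM.IsCardOrd θ #θ.toSet) (hθM : θ ∈ M)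
    (hcof : δ ≤ GM.cofSup θ.toSet)
    (lam : Cardinal.{1}) (hlam : lam = GM.cofSup {x | x ∈ M ∧ x ∈ θ.toSet})
    (hclosed : GM.SeqClosed lam M) :
    2 ^ lam ≤ #M := by
  obtain ⟨⟨H, ⟨hH, -⟩, hMH⟩, hguess⟩ := hM
  have hθ : θ.IsOrdinal := hθcard.1
  obtain ⟨B, hBC, hB_cof, hB_seg⟩ :=
    GM.exists_cofinal_forall_mk_lt_cofSup (A := {x | x ∈ M ∧ x ∈ θ.toSet}) fun x hx ↦ hθ.mem hx.2
  have hlam_le : lam ≤ #B := hlam ▸ csInf_le' ⟨B, hBC, rfl, hB_cof⟩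
  refine (power_le_power_left two_ne_zero hlam_le).trans
    (GM.two_power_mk_le_of_forall_exists_trace fun X hXB ↦ ?_)
  obtain ⟨x, rfl⟩ := GM.exists_toSet_eq_of_subset fun y hy ↦ (hBC (hXB hy)).2
  obtain ⟨y, hyM, hy⟩ := hguess x ⟨θ, hθM, fun z hz ↦ (hBC (hXB hz)).2⟩
    (GM.approx_of_toSet_subset hMH hH hθ hθM hcof hclosed (fun z hz ↦ (hBC hz).1)
      (fun z hz ↦ (hBC hz).2) (fun γ hγM hγθ ↦ hlam ▸ hB_seg γ ⟨hγM, hγθ⟩) hXB)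
  exact ⟨y, hyM, hy.trans (Set.inter_eq_left.2 fun z hz ↦ (hBC (hXB hz)).1)⟩
end

section
/- If GMP(δ⁺, δ) holds (there are stationarily many δ-guessing elementary submodels of size < δ⁺ of every sufficiently large H_θ), then there is no weak Kurepa tree at δ: every tree of height and size δ has at most δ cofinal branches. -/
open Cardinal

/-!
A cofinal branch `b` is bounded in any model `M` containing the tree `T`. If moreover `T ⊆ M`
and `M` is closed under `a ↦ pred(t) ∩ a` for nodes `t`, then `b` is δ-approximated in `M`: an
`a ∈ M` of size `< δ` meets fewer than `δ` levels, so by regularity they all lie below some level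
`γ`, and `b ∩ a = pred(t) ∩ a` for the node `t` of `b` on level `γ`. A δ-guessing such `M` of size
`≤ δ`, which stationarity provides, therefore guesses every branch; branches are subsets of `M`,
so distinct branches have distinct guesses, and there are at most `|M| ≤ δ` of them.
-/

theorem ZFSet.IsOrdinal.eq_of_memEquiv {α β : ZFSet} (hα : α.IsOrdinal) (hβ : β.IsOrdinal)
    (e : α.toSet ≃ β.toSet)
    (he : ∀ a b : α.toSet, (a : ZFSet) ∈ (b : ZFSet) ↔ (e a : ZFSet) ∈ (e b : ZFSet)) :
    α = β := by
  have e_eq : ∀ x (hx : x ∈ α.toSet), (e ⟨x, hx⟩ : ZFSet) = x := by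
    intro x
    induction x using ZFSet.inductionOn with
    | h x ih =>
      intro hx
      ext z
      constructor
      · intro hz
        obtain ⟨w, hw⟩ := e.surjective ⟨z, hβ.mem_trans hz (e ⟨x, hx⟩).2⟩
        have hwx : (w : ZFSet) ∈ x := (he w ⟨x, hx⟩).2 (by rw [hw]; exact hz)
        have hwz : (w : ZFSet) = z := by simpa [hw] using (ih w hwx w.2).symm
        exact hwz ▸ hwx
      · intro hz
        have hzα : z ∈ α := hα.mem_trans hz hx
        simpa only [ih z hz hzα] using (he ⟨z, hzα⟩ ⟨x, hx⟩).1 hz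
  ext z
  constructor
  · intro hz
    exact e_eq z hz ▸ (e ⟨z, hz⟩).2
  · intro hz
    have hz' : z = e.symm ⟨z, hz⟩ := by simpa using e_eq _ (e.symm ⟨z, hz⟩).2
    exact hz' ▸ (e.symm ⟨z, hz⟩).2

namespace GM

theorem Hered.mono {θ θ' : Cardinal.{1}} (h : θ ≤ θ') {x : ZFSet} (hx : Hered θ x) :
    Hered θ' x := by
  induction hx with
  | intro x hcard _ ih => exact .intro x (hcard.trans_le h) ih

theorem Hered.of_mem {θ : Cardinal.{1}} {x y : ZFSet} (hx : Hered θ x) (hy : y ∈ x.toSet) :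
    Hered θ y := by
  cases hx with
  | intro _ _ hmem => exact hmem y hy

theorem Hered.of_subset {θ : Cardinal.{1}} {x y : ZFSet} (hx : Hered θ x)
    (hyx : y.toSet ⊆ x.toSet) : Hered θ y := by
  cases hx with
  | intro _ hcard hmem =>
    exact .intro y ((Cardinal.mk_le_mk_of_subset hyx).trans_lt hcard) fun z hz => hmem z (hyx hz)

theorem exists_hered (x : ZFSet) : ∃ θ, Hered θ x := by
  induction x using ZFSet.inductionOn with
  | h x ih =>
    choose θ hθ using ih
    let μ := #x.toSet ⊔ ⨆ y : x.toSet, θ y y.2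
    refine ⟨Order.succ μ, .intro x ((le_sup_left).trans_lt (Order.lt_succ μ)) fun y hy => ?_⟩
    have hle : θ y hy ≤ ⨆ y : x.toSet, θ y y.2 :=
      le_ciSup (f := fun y : x.toSet => θ y y.2) Cardinal.bddAbove_of_small ⟨y, hy⟩
    exact (hθ y hy).mono (hle.trans (le_sup_right.trans (Order.le_succ μ)))

section Tree

universe u

variable {T R : ZFSet.{u}}

def RelTrans (R : ZFSet.{u}) : Prop :=
  ∀ x y z : ZFSet, ZFSet.pair x y ∈ R → ZFSet.pair y z ∈ R → ZFSet.pair x z ∈ R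

theorem IsTreeOfHeight.relTrans {Λ : ZFSet.{u}} (h : IsTreeOfHeight T R Λ) : RelTrans R :=
  h.2.2.1

def predSet (T R t : ZFSet.{u}) : ZFSet.{u} := ZFSet.sep (fun s => ZFSet.pair s t ∈ R) T

theorem mem_predSet {t z : ZFSet.{u}} : z ∈ predSet T R t ↔ z ∈ Pred T R t :=
  ZFSet.mem_sep

theorem HasLevel.unique {t β γ : ZFSet.{u}} (hβ : HasLevel T R t β) (hγ : HasLevel T R t γ) :
    β = γ := by
  obtain ⟨hβord, e₁, he₁⟩ := hβ
  obtain ⟨hγord, e₂, he₂⟩ := hγ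
  refine hβord.eq_of_memEquiv hγord (e₁.trans e₂.symm) fun a b => ?_
  rw [Equiv.trans_apply, Equiv.trans_apply, he₁ a b, he₂, Equiv.apply_symm_apply,
    Equiv.apply_symm_apply]

theorem HasLevel.exists_of_mem_pred (hR : RelTrans R) {s t γ : ZFSet.{u}}
    (ht : HasLevel T R t γ) (hs : s ∈ Pred T R t) : ∃ ξ ∈ γ.toSet, HasLevel T R s ξ := by
  obtain ⟨hγ, e, he⟩ := ht
  set x₀ := e.symm ⟨s, hs⟩
  have hx₀ : (e x₀ : ZFSet) = s := by simp [x₀]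
  have hmem : ∀ a : γ.toSet, (a : ZFSet) ∈ (x₀ : ZFSet) ↔ (e a : ZFSet) ∈ Pred T R s := by
    intro a
    rw [he a x₀, hx₀]
    exact ⟨fun h => ⟨(e a).2.1, h⟩, And.right⟩
  let f : (x₀ : ZFSet).toSet ≃ Pred T R s :=
    (Equiv.subtypeSubtypeEquivSubtype fun h => hγ.mem_trans h x₀.2).symm.trans
      ((e.subtypeEquiv hmem).trans
        (Equiv.subtypeSubtypeEquivSubtype fun h => ⟨h.1, hR _ _ _ h.2 hs.2⟩))
  exact ⟨x₀, x₀.2, hγ.mem x₀.2, f, fun a b =>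
    he ⟨a, hγ.mem_trans a.2 x₀.2⟩ ⟨b, hγ.mem_trans b.2 x₀.2⟩⟩

theorem HasLevel.mem_of_rel (hR : RelTrans R) {s t β γ : ZFSet.{u}} (hs : s ∈ T.toSet)
    (hst : ZFSet.pair s t ∈ R) (hβ : HasLevel T R s β) (hγ : HasLevel T R t γ) : β ∈ γ := by
  obtain ⟨ξ, hξ, hsξ⟩ := hγ.exists_of_mem_pred hR ⟨hs, hst⟩
  rwa [hβ.unique hsξ]

theorem HasLevel.rel_trichotomous {t γ x y : ZFSet.{u}} (hγ : HasLevel T R t γ)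
    (hx : x ∈ Pred T R t) (hy : y ∈ Pred T R t) :
    x = y ∨ ZFSet.pair x y ∈ R ∨ ZFSet.pair y x ∈ R := by
  obtain ⟨hord, e, he⟩ := hγ
  have hx' : (e (e.symm ⟨x, hx⟩) : ZFSet) = x := by simp
  have hy' : (e (e.symm ⟨y, hy⟩) : ZFSet) = y := by simp
  rcases (hord.mem (e.symm ⟨x, hx⟩).2).mem_trichotomous (hord.mem (e.symm ⟨y, hy⟩).2)
    with h | h | h
  · exact .inr (.inl (hx' ▸ hy' ▸ (he _ _).1 h))
  · exact .inl (by simpa using congrArg e (Subtype.ext h))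
  · exact .inr (.inr (hx' ▸ hy' ▸ (he _ _).1 h))

theorem IsBranch.rel_of_level_mem {Λ b : ZFSet.{u}} (hR : RelTrans R) (hb : IsBranch T R Λ b)
    {s t β γ : ZFSet.{u}} (hs : s ∈ b.toSet) (ht : t ∈ b.toSet) (hβ : HasLevel T R s β)
    (hγ : HasLevel T R t γ) (hβγ : β ∈ γ) : ZFSet.pair s t ∈ R := by
  rcases hb.2.1 s hs t ht with rfl | h | h
  · exact absurd (hβ.unique hγ ▸ hβγ) (ZFSet.mem_irrefl γ)
  · exact h
  · exact absurd (hγ.mem_of_rel hR (hb.1 ht) h hβ) (ZFSet.mem_asymm hβγ)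

theorem IsBranch.mem_iff_rel {Λ b : ZFSet.{u}} (hT : IsTreeOfHeight T R Λ) (hb : IsBranch T R Λ b)
    {t z β γ : ZFSet.{u}} (ht : t ∈ b.toSet) (hγ : HasLevel T R t γ) (hz : z ∈ T.toSet)
    (hβ : HasLevel T R z β) (hβγ : β ∈ γ) : z ∈ b.toSet ↔ ZFSet.pair z t ∈ R := by
  refine ⟨fun hzb => hb.rel_of_level_mem hT.relTrans hzb ht hβ hγ hβγ, fun hzt => ?_⟩
  obtain ⟨β', hβ'Λ, hzβ'⟩ := hT.2.2.2.2.1 z hz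
  obtain ⟨s, hsb, hsβ⟩ := hb.2.2 β (hβ.unique hzβ' ▸ hβ'Λ)
  have hst := hb.rel_of_level_mem hT.relTrans hsb ht hsβ hγ hβγ
  rcases hγ.rel_trichotomous ⟨hz, hzt⟩ ⟨hb.1 hsb, hst⟩ with rfl | h | h
  · exact hsb
  · exact absurd (hβ.mem_of_rel hT.relTrans hz h hsβ) (ZFSet.mem_irrefl β)
  · exact absurd (hsβ.mem_of_rel hT.relTrans (hb.1 hsb) h hβ) (ZFSet.mem_irrefl β)

end Tree

theorem IsCardOrd.exists_forall_mem_of_mk_lt {Δ : ZFSet} {δ : Cardinal.{1}}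
    (hΔ : IsCardOrd Δ δ) (hδ : δ.IsRegular) {ι : Type 1} (f : ι → ZFSet)
    (hf : ∀ i, f i ∈ Δ.toSet) (hι : #ι < δ) : ∃ γ ∈ Δ.toSet, ∀ i, f i ∈ γ := by
  by_contra! h
  have hcover : Δ.toSet ⊆ ⋃ i, insert (f i) (f i).toSet := by
    intro γ hγ
    obtain ⟨i, hi⟩ := h γ hγ
    rcases (hΔ.1.mem hγ).mem_trichotomous (hΔ.1.mem (hf i)) with h' | h' | h'
    · exact Set.mem_iUnion.2 ⟨i, Set.mem_insert_of_mem _ h'⟩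
    · exact Set.mem_iUnion.2 ⟨i, Set.mem_insert_iff.2 (.inl h')⟩
    · exact absurd h' hi
  have hsmall : ∀ i, #(insert (f i) (f i).toSet : Set ZFSet) < δ := fun i =>
    Cardinal.mk_insert_le.trans_lt (Cardinal.add_lt_of_lt hδ.aleph0_le (hΔ.2.2 _ (hf i))
      (Cardinal.one_lt_aleph0.trans_le hδ.aleph0_le))
  have hlt : #(⋃ i, insert (f i) (f i).toSet) < δ :=
    Cardinal.mk_iUnion_le_sum_mk.trans_lt (Cardinal.sum_lt_of_isRegular hδ hι hsmall)
  have hle := Cardinal.mk_le_mk_of_subset hcover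
  rw [hΔ.2.1] at hle
  exact hle.not_gt hlt

theorem IsBranch.approx {δ : Cardinal.{1}} (hδ : δ.IsRegular) {Δ T R b : ZFSet}
    (hΔ : IsCardOrd Δ δ) (hT : IsTreeOfHeight T R Δ) (hb : IsBranch T R Δ b) {M : Set ZFSet}
    (hM : ∀ a ∈ M, ∀ t ∈ T.toSet, predSet T R t ∩ a ∈ M) : Approx δ b M := by
  intro a ha hacard
  choose level hlevelΔ hlevel using hT.2.2.2.2.1
  obtain ⟨γ, hγΔ, hγ⟩ := hΔ.exists_forall_mem_of_mk_lt hδ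
    (fun z : {z // z ∈ a.toSet ∧ z ∈ T.toSet} => level z z.2.2) (fun z => hlevelΔ _ _)
    ((Cardinal.mk_subtype_le_of_subset fun _ h => h.1).trans_lt hacard)
  obtain ⟨t, htb, htγ⟩ := hb.2.2 γ hγΔ
  convert hM a ha t (hb.1 htb) using 1
  ext z
  rw [ZFSet.mem_inter, ZFSet.mem_inter, mem_predSet]
  refine and_congr_left fun hza => ⟨fun hzb => ⟨hb.1 hzb, ?_⟩, fun hzt => ?_⟩
  · exact (hb.mem_iff_rel hT htb htγ (hb.1 hzb) (hlevel z _) (hγ ⟨z, hza, hb.1 hzb⟩)).1 hzb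
  · exact (hb.mem_iff_rel hT htb htγ hzt.1 (hlevel z _) (hγ ⟨z, hza, hzt.1⟩)).2 hzt.2

def treeHull (θ : Cardinal.{1}) (T R : ZFSet) (s : Finset ZFSet) : Set ZFSet :=
  HSet θ ∩ ((insert T T.toSet : Set ZFSet) ∪ Set.image2 (fun x t => predSet T R t ∩ x) ↑s T.toSet)

theorem mk_treeHull_le {θ δ : Cardinal.{1}} (hδ : ℵ₀ ≤ δ) {T R : ZFSet} (hT : #T.toSet ≤ δ)
    (s : Finset ZFSet) : #(treeHull θ T R s) ≤ δ :=
  calc #(treeHull θ T R s)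
      ≤ #(insert T T.toSet : Set ZFSet) +
          #(Set.image2 (fun x t => predSet T R t ∩ x) (↑s : Set ZFSet) T.toSet) :=
        (Cardinal.mk_le_mk_of_subset Set.inter_subset_right).trans (Cardinal.mk_union_le _ _)
    _ ≤ (#T.toSet + 1) + #(↑s : Set ZFSet) * #T.toSet :=
        add_le_add Cardinal.mk_insert_le Cardinal.mk_image2_le
    _ ≤ (δ + δ) + δ * δ := by
        gcongr
        · exact Cardinal.one_le_aleph0.trans hδ
        · exact s.finite_toSet.lt_aleph0.le.trans hδ
    _ = δ := by rw [Cardinal.add_eq_self hδ, Cardinal.mul_eq_self hδ, Cardinal.add_eq_self hδ]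

theorem treeHull_closed {θ : Cardinal.{1}} {T R : ZFSet} {M : Set ZFSet} (hM : M ⊆ HSet θ)
    (hT : Hered θ T) (hclosed : ∀ s : Finset ZFSet, ↑s ⊆ M → treeHull θ T R s ⊆ M) :
    T ∈ M ∧ T.toSet ⊆ M ∧ ∀ a ∈ M, ∀ t ∈ T.toSet, predSet T R t ∩ a ∈ M := by
  refine ⟨hclosed ∅ (by simp) ⟨hT, .inl (Set.mem_insert _ _)⟩,
    fun u hu => hclosed ∅ (by simp) ⟨hT.of_mem hu, .inl (Set.mem_insert_of_mem _ hu)⟩,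
    fun a ha t ht => hclosed {a} (by simpa using ha) ⟨?_, .inr ⟨a, by simp, t, ht, rfl⟩⟩⟩
  exact (hM ha).of_subset fun z hz => (ZFSet.mem_inter.1 hz).2

theorem mk_le_of_forall_guessed {M B : Set ZFSet} (hB : ∀ x ∈ B, x.toSet ⊆ M ∧ Guessed x M) :
    #B ≤ #M := by
  choose g hgM hg using fun x : B => (hB x x.2).2
  have hg_eq (x : B) : (g x).toSet ∩ M = (x : ZFSet).toSet :=
    (hg x).trans (Set.inter_eq_left.2 (hB x x.2).1)
  refine Cardinal.mk_le_of_injective (f := fun x => (⟨g x, hgM x⟩ : M)) fun x y hxy => ?_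
  have hgxy : g x = g y := congrArg Subtype.val hxy
  exact Subtype.ext (SetLike.coe_injective ((hg_eq x).symm.trans (hgxy ▸ hg_eq y)))

end GM

/-- `GMP(δ⁺, δ)` implies the failure of the weak Kurepa Hypothesis
at δ: every tree of height and size δ has at most δ cofinal branches. -/
theorem stmt8
    (δ : Cardinal.{1}) (hδ : δ.IsRegular)
    (hGMP : GM.GMP (Order.succ δ) δ) :
    ∀ T R Δ : ZFSet, GM.IsCardOrd Δ δ → GM.IsTreeOfHeight T R Δ →
      #T.toSet ≤ δ → #{b : ZFSet | GM.IsBranch T R Δ b} ≤ δ := by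
  intro T R Δ hΔ hT hTcard
  obtain ⟨θ₀, hθ₀⟩ := hGMP
  obtain ⟨θT, hθT⟩ := GM.exists_hered T
  set θ := Order.succ (θ₀ ⊔ θT ⊔ δ)
  have hθreg : θ.IsRegular := Cardinal.isRegular_succ (hδ.aleph0_le.trans le_sup_right)
  have hθ : θ₀ ⊔ θT ⊔ δ ≤ θ := Order.le_succ _
  obtain ⟨M, ⟨-, hguess, hMcard, -⟩, hMH, -, hclosed⟩ :=
    hθ₀ θ (le_sup_left.trans (le_sup_left.trans hθ)) hθreg (GM.treeHull θ T R) fun s =>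
      ⟨Set.inter_subset_left, (GM.mk_treeHull_le hδ.aleph0_le hTcard s).trans_lt (Order.lt_succ δ)⟩
  obtain ⟨hTM, hTsub, hpred⟩ :=
    GM.treeHull_closed hMH (hθT.mono (le_sup_right.trans (le_sup_left.trans hθ))) hclosed
  calc #{b : ZFSet | GM.IsBranch T R Δ b}
      ≤ #M := GM.mk_le_of_forall_guessed fun b hb =>
        ⟨hb.1.trans hTsub, hguess b ⟨T, hTM, hb.1⟩ (hb.approx hδ hΔ hT hpred)⟩
    _ ≤ δ := Order.lt_succ_iff.1 hMcard
end

section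
/- Every strongly δ-guessing model is δ-guessing: if M = ⋃_{ξ<κ⁺} M_ξ is the union of an ∈-increasing chain of δ-guessing models of cardinality κ with M_ξ = ⋃_{η<ξ} M_η for every ξ of cofinality κ, then every set bounded and δ-approximated in M is guessed in M. -/
open Cardinal

/-! Write `Λ = κ⁺`. Since `|M_ζ| = κ < cf Λ`, there is `s(ζ) < Λ` such that `x ∩ a ∈ M_{s(ζ)}`
for every `a ∈ M_ζ` of size `< δ`. At every `ξ < Λ` of cofinality `κ` that is closed under `s`,
continuity makes `x` bounded and `δ`-approximated in `M_ξ`, so `M_ξ` guesses `x` by some `y`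
lying in an earlier `M_r`. A pressing-down argument over these closure points yields a single
`y ∈ M` that is such a guess for cofinally many `ξ`; as every element of `M` lies in all late
enough `M_ξ` of cofinality `κ`, this `y` guesses `x` in `M`. -/

open Order Set

theorem Set.inter_eq_inter_of_forall_mem {α : Type*} {A B M : Set α}
    (h : ∀ t ∈ M, ∃ N : Set α, t ∈ N ∧ A ∩ N = B ∩ N) : A ∩ M = B ∩ M := by
  ext t
  refine and_congr_left fun ht => ?_
  obtain ⟨N, htN, hN⟩ := h t ht
  simpa [htN] using Set.ext_iff.1 hN t

namespace Ordinal

universe u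

section ClosurePoints

variable {f : Ordinal.{u} → Ordinal.{u}} {ζ β : Ordinal.{u}}

/-- Iterating this map (through `nfp` or `deriv`) produces closure points of `f`, i.e. ordinals
`ξ` with `f ζ < ξ` for all `ζ < ξ`. -/
noncomputable def supSuccBelow (f : Ordinal.{u} → Ordinal.{u}) (β : Ordinal.{u}) :
    Ordinal.{u} :=
  ⨆ η : Iio β, f η + 1

theorem lt_supSuccBelow (h : ζ < β) : f ζ < supSuccBelow f β :=
  lt_iSup_add_one (fun η : Iio β => f η) ⟨ζ, h⟩

theorem supSuccBelow_lt_ord {c : Cardinal.{u}} (hc : c.IsRegular)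
    (hf : ∀ ζ < c.ord, f ζ < c.ord) (hβ : β < c.ord) : supSuccBelow f β < c.ord := by
  apply lift_iSup_add_one_lt_of_lt_cof
  · rwa [← lift_cof, hc.cof_ord, Cardinal.mk_Iio_ordinal, Cardinal.lift_lift, Cardinal.lift_lt,
      ← lt_ord]
  · exact fun η => hf η (η.2.trans hβ)

theorem apply_lt_nfp_supSuccBelow {b : Ordinal.{u}} (h : ζ < nfp (supSuccBelow f) b) :
    f ζ < nfp (supSuccBelow f) b := by
  obtain ⟨n, hn⟩ := lt_nfp_iff.1 h
  calc f ζ < supSuccBelow f ((supSuccBelow f)^[n] b) := lt_supSuccBelow hn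
    _ = (supSuccBelow f)^[n + 1] b := (Function.iterate_succ_apply' _ n b).symm
    _ ≤ nfp (supSuccBelow f) b := iterate_le_nfp _ _ _

theorem apply_lt_deriv_supSuccBelow {o : Ordinal.{u}} (ho : IsSuccLimit o)
    (h : ζ < deriv (supSuccBelow f) o) : f ζ < deriv (supSuccBelow f) o := by
  have : Small.{u} {a // a < o} := small_Iio o
  rw [deriv_limit _ ho, Ordinal.lt_iSup_iff] at h
  obtain ⟨⟨a, ha⟩, hζ⟩ := h
  have hζ' : ζ < nfp (supSuccBelow f) (deriv (supSuccBelow f) a + 1) :=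
    (hζ.trans (lt_add_one _)).trans_le (le_nfp _ _)
  calc f ζ < deriv (supSuccBelow f) (a + 1) := by
        rw [deriv_add_one]
        exact apply_lt_nfp_supSuccBelow hζ'
    _ ≤ deriv (supSuccBelow f) o := (isNormal_deriv _).strictMono.monotone (ho.add_one_lt ha).le

theorem exists_cof_eq_forall_apply_lt {c κ : Cardinal.{u}} (hc : c.IsRegular)
    (hκ : κ.IsRegular) (hκc : κ < c) (hf : ∀ ζ < c.ord, f ζ < c.ord) {α : Ordinal.{u}}
    (hα : α < c.ord) : ∃ ξ, α < ξ ∧ ξ < c.ord ∧ ξ.cof = κ ∧ ∀ ζ < ξ, f ζ < ξ := by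
  set g : Ordinal.{u} → Ordinal.{u} := fun ζ => max (f ζ) α
  set ξ := deriv (supSuccBelow g) κ.ord
  have hκlim : IsSuccLimit κ.ord := isSuccLimit_ord hκ.aleph0_le
  have hclosed : ∀ ζ < ξ, g ζ < ξ := fun ζ => apply_lt_deriv_supSuccBelow hκlim
  have hpos : 0 < ξ := hκlim.bot_lt.trans_le (isNormal_deriv _).strictMono.le_apply
  refine ⟨ξ, (le_max_right _ _).trans_lt (hclosed 0 hpos), ?_, ?_,
    fun ζ hζ => (le_max_left _ _).trans_lt (hclosed ζ hζ)⟩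
  · refine deriv_lt_ord hc (hκ.aleph0_le.trans_lt hκc).ne' (fun β hβ => ?_) (ord_lt_ord.2 hκc)
    exact supSuccBelow_lt_ord hc (fun ζ hζ => max_lt (hf ζ hζ) hα) hβ
  · rw [cof_map_of_isNormal (isNormal_deriv _) hκlim, hκ.cof_ord]

end ClosurePoints

theorem exists_lt_subset_biUnion_of_mk_lt_cof {α : Type u} {o : Ordinal.{u}}
    {N : Ordinal.{u} → Set α} {A : Set α} (hA : A ⊆ ⋃ ζ < o, N ζ) (hAo : #A < o.cof) :
    ∃ β < o, A ⊆ ⋃ ζ < β, N ζ := by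
  have hidx : ∀ t : A, ∃ ζ < o, t.1 ∈ N ζ := fun t => by simpa using hA t.2
  choose idx hidx hmem using hidx
  exact ⟨⨆ t, idx t + 1, iSup_add_one_lt_of_lt_cof hAo hidx,
    fun t ht => mem_iUnion₂.2 ⟨idx ⟨t, ht⟩, lt_iSup_add_one _ _, hmem _⟩⟩

theorem exists_mem_unbounded_of_regressive {α : Type u} {c κ : Cardinal.{u}} (hc : c.IsRegular)
    (hκ : κ.IsRegular) (hκc : κ < c) {N : Ordinal.{u} → Set α} (hN : ∀ r < c.ord, #(N r) < c)
    {s : Ordinal.{u} → Ordinal.{u}} (hs : ∀ ζ < c.ord, s ζ < c.ord) {α₀ : Ordinal.{u}}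
    (hα₀ : α₀ < c.ord) {P : α → Ordinal.{u} → Prop}
    (hP : ∀ ξ < c.ord, α₀ < ξ → ξ.cof = κ → (∀ ζ < ξ, s ζ < ξ) → ∃ r < ξ, ∃ y ∈ N r, P y ξ) :
    ∃ r < c.ord, ∃ y ∈ N r, ∀ β < c.ord, ∃ ξ, β < ξ ∧ ξ < c.ord ∧ ξ.cof = κ ∧ P y ξ := by
  by_contra! H
  choose! A hAlt hA using H
  -- `b r` bounds every `ξ` at which an element of `N r` satisfies `P · ξ`.
  set b : Ordinal.{u} → Ordinal.{u} := fun r => ⨆ y : N r, A r y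
  have hb : ∀ r < c.ord, b r < c.ord := fun r hr =>
    iSup_lt_of_lt_cof (by rw [hc.cof_ord]; exact hN r hr) fun y => hAlt r hr y y.2
  obtain ⟨ξ, hα₀ξ, hξ, hcof, hcl⟩ := exists_cof_eq_forall_apply_lt hc hκ hκc
    (f := fun ζ => max (s ζ) (b ζ)) (fun ζ hζ => max_lt (hs ζ hζ) (hb ζ hζ)) hα₀
  obtain ⟨r, hrξ, y, hy, hPy⟩ :=
    hP ξ hξ hα₀ξ hcof fun ζ hζ => (le_max_left _ _).trans_lt (hcl ζ hζ)
  refine hA r (hrξ.trans hξ) y hy ξ ?_ hξ hcof hPy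
  calc A r y ≤ b r := Ordinal.le_iSup (fun y : N r => A r y) ⟨y, hy⟩
    _ ≤ max (s r) (b r) := le_max_right _ _
    _ < ξ := hcl r hrξ

end Ordinal

namespace GM

variable {δ : Cardinal.{1}} {x : ZFSet} {N : Ordinal.{1} → Set ZFSet}

theorem Approx.exists_bound {o : Ordinal.{1}} (happ : Approx δ x (⋃ ζ < o, N ζ))
    (hN : ∀ ζ < o, #(N ζ) < o.cof) :
    ∃ s : Ordinal.{1} → Ordinal.{1}, (∀ ζ < o, s ζ < o) ∧
      ∀ ζ < o, ∀ a ∈ N ζ, #a.toSet < δ → ∃ η < s ζ, x ∩ a ∈ N η := by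
  have hbound : ∀ ζ < o, ∃ β < o,
      (fun a => x ∩ a) '' {a ∈ N ζ | #a.toSet < δ} ⊆ ⋃ η < β, N η := fun ζ hζ =>
    Ordinal.exists_lt_subset_biUnion_of_mk_lt_cof
      (image_subset_iff.2 fun a ha => happ a (mem_biUnion hζ ha.1) ha.2)
      (mk_image_le.trans_lt ((mk_le_mk_of_subset (sep_subset _ _)).trans_lt (hN ζ hζ)))
  choose! s hs hsub using hbound
  exact ⟨s, hs, fun ζ hζ a ha hδa => by
    simpa only [mem_iUnion₂, exists_prop] using hsub ζ hζ (mem_image_of_mem _ ⟨ha, hδa⟩)⟩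

theorem approx_of_forall_lt {s : Ordinal.{1} → Ordinal.{1}} {ξ : Ordinal.{1}}
    (hξ : N ξ = ⋃ η < ξ, N η)
    (hs : ∀ ζ < ξ, ∀ a ∈ N ζ, #a.toSet < δ → ∃ η < s ζ, x ∩ a ∈ N η)
    (hcl : ∀ ζ < ξ, s ζ < ξ) : Approx δ x (N ξ) := by
  intro a ha hδa
  rw [hξ] at ha ⊢
  obtain ⟨ζ, hζ, haζ⟩ := mem_iUnion₂.1 ha
  obtain ⟨η, hη, hxa⟩ := hs ζ hζ a haζ hδa
  exact mem_biUnion (hη.trans (hcl ζ hζ)) hxa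

theorem Guessed.exists_lt {ξ : Ordinal.{1}} (hξ : N ξ = ⋃ η < ξ, N η) (h : Guessed x (N ξ)) :
    ∃ r < ξ, ∃ y ∈ N r, y.toSet ∩ N ξ = x.toSet ∩ N ξ := by
  obtain ⟨y, hy, hyx⟩ := h
  rw [hξ] at hy
  obtain ⟨r, hr, hyr⟩ := mem_iUnion₂.1 hy
  exact ⟨r, hr, y, hyr, hyx⟩

end GM

theorem stmt14_general
    (δ κ : Cardinal.{1}) (hκ : κ.IsRegular)
    (Mc : Ordinal.{1} → Set ZFSet) (M : Set ZFSet)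
    (hM : M = ⋃ ξ ∈ {ξ : Ordinal.{1} | ξ < (Order.succ κ).ord}, Mc ξ)
    (hguess : ∀ ξ : Ordinal.{1}, ξ < (Order.succ κ).ord →
      GM.IsGuessing δ (Mc ξ) ∧ #(Mc ξ) = κ)
    (hcont : ∀ ξ : Ordinal.{1}, ξ < (Order.succ κ).ord → ξ.cof = κ →
      Mc ξ = ⋃ η ∈ {η : Ordinal.{1} | η < ξ}, Mc η) :
    GM.IsGuessing δ M := by
  rintro x ⟨y₀, hy₀, hxy₀⟩ happ
  subst hM
  have hc : (succ κ).IsRegular := Cardinal.isRegular_succ hκ.aleph0_le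
  have hκc : κ < succ κ := lt_succ κ
  have hsize : ∀ ζ < (succ κ).ord, #(Mc ζ) < succ κ := fun ζ hζ => (hguess ζ hζ).2 ▸ hκc
  have hsub : ∀ ζ ξ, ζ < ξ → ξ < (succ κ).ord → ξ.cof = κ → Mc ζ ⊆ Mc ξ :=
    fun ζ ξ hζξ hξ hcof t ht => hcont ξ hξ hcof ▸ mem_biUnion hζξ ht
  obtain ⟨ζ₀, hζ₀, hy₀ζ₀⟩ := mem_iUnion₂.1 hy₀
  obtain ⟨s, hs, hsx⟩ := happ.exists_bound fun ζ hζ => by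
    rw [hc.cof_ord]
    exact hsize ζ hζ
  have hguessAt : ∀ ξ < (succ κ).ord, ζ₀ < ξ → ξ.cof = κ → (∀ ζ < ξ, s ζ < ξ) →
      ∃ r < ξ, ∃ y ∈ Mc r, y.toSet ∩ Mc ξ = x.toSet ∩ Mc ξ := by
    intro ξ hξ hζ₀ξ hcof hcl
    have hbdd : GM.Bounded x (Mc ξ) := ⟨y₀, hsub ζ₀ ξ hζ₀ξ hξ hcof hy₀ζ₀, hxy₀⟩
    have happξ : GM.Approx δ x (Mc ξ) :=
      GM.approx_of_forall_lt (hcont ξ hξ hcof) (fun ζ hζ => hsx ζ (hζ.trans hξ)) hcl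
    exact ((hguess ξ hξ).1 x hbdd happξ).exists_lt (hcont ξ hξ hcof)
  obtain ⟨r, hr, y, hy, hyx⟩ :=
    Ordinal.exists_mem_unbounded_of_regressive hc hκ hκc hsize hs hζ₀ hguessAt
  refine ⟨y, mem_biUnion hr hy, inter_eq_inter_of_forall_mem fun t ht => ?_⟩
  obtain ⟨ζ, hζ, htζ⟩ := mem_iUnion₂.1 ht
  obtain ⟨ξ, hζξ, hξ, hcof, hyξ⟩ := hyx ζ hζ
  exact ⟨Mc ξ, hsub ζ ξ hζξ hξ hcof htζ, hyξ⟩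

/-- every strongly δ-guessing model is δ-guessing. -/
theorem stmt14
    (δ κ : Cardinal.{1}) (hδ : δ.IsRegular) (hκ : κ.IsRegular)
    (hδu : Cardinal.aleph0 < δ) (hδκ : δ ≤ κ)
    (Mc : Ordinal.{1} → Set ZFSet) (M : Set ZFSet)
    (hM : M = ⋃ ξ ∈ {ξ : Ordinal.{1} | ξ < (Order.succ κ).ord}, Mc ξ)
    (hmono : ∀ ξ η : Ordinal.{1}, ξ < η → η < (Order.succ κ).ord →
      ∃ z ∈ Mc η, z.toSet = Mc ξ)
    (hguess : ∀ ξ : Ordinal.{1}, ξ < (Order.succ κ).ord →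
      GM.IsGuessing δ (Mc ξ) ∧ #(Mc ξ) = κ)
    (hcont : ∀ ξ : Ordinal.{1}, ξ < (Order.succ κ).ord → ξ.cof = κ →
      Mc ξ = ⋃ η ∈ {η : Ordinal.{1} | η < ξ}, Mc η) :
    GM.IsGuessing δ M :=
  stmt14_general δ κ hκ Mc M hM hguess hcont
end
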